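/- Let p = (p₁, p₂) ∈ ℝ² with p₁ ≠ p₂. Then there exists a unique point w in the set C = {(a, b) ∈ ℝ² : a ≥ 2b or b ≥ 2a} minimizing the Euclidean distance to p, i.e., a unique w ∈ C such that ‖p − w‖ ≤ ‖p − w′‖ for all w′ ∈ C. -/

import Mathlib

/-!
The liveness set is the union of the two closed half-planes `a - 2b ≥ 0` and `b - 2a ≥ 0`.
Onto a half-plane `{x | 0 ≤ ⟪u, x⟫}` not containing `p` the projection is unique, at distance
`-⟪u, p⟫ / ‖u‖` from `p`. For `p` outside both half-planes these distances are
`(2p₁ - p₀)/√5` and `(2p₀ - p₁)/√5`, which differ exactly when `p₀ ≠ p₁`; the nearer of the two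
projections is then the unique nearest point of the union.
-/

open RealInnerProductSpace

section Metric

variable {X : Type*} [MetricSpace X]

def IsStrictNearest (s : Set X) (p w : X) : Prop :=
  w ∈ s ∧ ∀ x ∈ s, x ≠ w → dist p w < dist p x

theorem isStrictNearest_self {s : Set X} {p : X} (hp : p ∈ s) : IsStrictNearest s p p :=
  ⟨hp, fun x _ hx => by simpa using dist_pos.mpr hx.symm⟩

namespace IsStrictNearest

variable {s t : Set X} {p w w' : X}

theorem existsUnique (h : IsStrictNearest s p w) :
    ∃! w, w ∈ s ∧ ∀ x ∈ s, dist p w ≤ dist p x := by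
  refine ⟨w, ⟨h.1, fun x hx => ?_⟩, fun v ⟨hv, hvmin⟩ => ?_⟩
  · rcases eq_or_ne x w with rfl | hxw
    · exact le_rfl
    · exact (h.2 x hx hxw).le
  · by_contra hvw
    exact (hvmin w h.1).not_gt (h.2 v hv hvw)

theorem union_of_dist_lt (hs : IsStrictNearest s p w) (ht : IsStrictNearest t p w')
    (hlt : dist p w < dist p w') : IsStrictNearest (s ∪ t) p w := by
  refine ⟨Or.inl hs.1, fun x hx hxw => ?_⟩
  rcases hx with hx | hx
  · exact hs.2 x hx hxw
  · rcases eq_or_ne x w' with rfl | hxw'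
    · exact hlt
    · exact hlt.trans (ht.2 x hx hxw')

end IsStrictNearest

end Metric

section HalfSpace

variable {E : Type*} [NormedAddCommGroup E] [InnerProductSpace ℝ E]

noncomputable def hyperplaneProj (u p : E) : E :=
  p - (⟪u, p⟫ / ‖u‖ ^ 2) • u

theorem sub_hyperplaneProj (u p : E) : p - hyperplaneProj u p = (⟪u, p⟫ / ‖u‖ ^ 2) • u := by
  simp [hyperplaneProj]

theorem inner_hyperplaneProj {u : E} (hu : u ≠ 0) (p : E) : ⟪u, hyperplaneProj u p⟫ = 0 := by
  have : ‖u‖ ^ 2 ≠ 0 := by positivity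
  rw [hyperplaneProj, inner_sub_right, inner_smul_right, real_inner_self_eq_norm_sq]
  field_simp
  ring

theorem dist_hyperplaneProj {u p : E} (hp : ⟪u, p⟫ < 0) :
    dist p (hyperplaneProj u p) = -⟪u, p⟫ / ‖u‖ := by
  have hu : u ≠ 0 := by rintro rfl; simp at hp
  have : ‖u‖ ≠ 0 := norm_ne_zero_iff.mpr hu
  rw [dist_eq_norm, sub_hyperplaneProj, norm_smul, Real.norm_eq_abs,
    abs_of_neg (div_neg_of_neg_of_pos hp (by positivity))]
  field_simp

/-- For `p` outside the half-space `0 ≤ ⟪u, x⟫`, Pythagoras with an obtuse angle at the projection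
`w` gives `‖p - x‖² ≥ ‖p - w‖² + ‖w - x‖²` for every `x` in the half-space. -/
theorem isStrictNearest_hyperplaneProj {u p : E} (hp : ⟪u, p⟫ < 0) :
    IsStrictNearest {x | 0 ≤ ⟪u, x⟫} p (hyperplaneProj u p) := by
  have hu : u ≠ 0 := by rintro rfl; simp at hp
  set w := hyperplaneProj u p
  set c := ⟪u, p⟫ / ‖u‖ ^ 2
  have hc : c < 0 := div_neg_of_neg_of_pos hp (by positivity)
  have huw : ⟪u, w⟫ = 0 := inner_hyperplaneProj hu p
  refine ⟨huw.ge, fun x (hx : 0 ≤ ⟪u, x⟫) hxw => ?_⟩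
  have hcross : ⟪p - w, w - x⟫ = -c * ⟪u, x⟫ := by
    rw [sub_hyperplaneProj, inner_smul_left, inner_sub_right, huw]
    simp [c]
  have hsplit : ‖p - x‖ ^ 2 = ‖p - w‖ ^ 2 + 2 * ⟪p - w, w - x⟫ + ‖w - x‖ ^ 2 := by
    rw [← norm_add_sq_real, sub_add_sub_cancel]
  have hwx : 0 < ‖w - x‖ := norm_pos_iff.mpr (sub_ne_zero.mpr hxw.symm)
  have hsq : ‖p - w‖ ^ 2 < ‖p - x‖ ^ 2 := by
    rw [hsplit, hcross]
    nlinarith [mul_nonneg (neg_nonneg.mpr hc.le) hx]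
  rw [dist_eq_norm, dist_eq_norm]
  exact lt_of_pow_lt_pow_left₀ 2 (norm_nonneg _) hsq

theorem dist_hyperplaneProj_lt {u v p : E} (huv : ‖u‖ = ‖v‖) (hu : ⟪u, p⟫ < 0)
    (hlt : ⟪v, p⟫ < ⟪u, p⟫) : dist p (hyperplaneProj u p) < dist p (hyperplaneProj v p) := by
  have hu0 : u ≠ 0 := by rintro rfl; simp at hu
  rw [dist_hyperplaneProj hu, dist_hyperplaneProj (hlt.trans hu), huv]
  gcongr
  exact huv ▸ norm_pos_iff.mpr hu0

end HalfSpace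

section Plane

theorem inner_vecTwo (a b : ℝ) (x : EuclideanSpace ℝ (Fin 2)) :
    ⟪!₂[a, b], x⟫ = a * x 0 + b * x 1 := by
  simp [PiLp.inner_apply, Fin.sum_univ_two]
  ring

theorem liveness_eq_union :
    {x : EuclideanSpace ℝ (Fin 2) | x 0 ≥ 2 * x 1 ∨ x 1 ≥ 2 * x 0} =
      {x | 0 ≤ ⟪!₂[1, -2], x⟫} ∪ {x | 0 ≤ ⟪!₂[-2, 1], x⟫} := by
  ext x
  simp only [Set.mem_ofPred_eq, Set.mem_union, inner_vecTwo]
  constructor <;> rintro (h | h) <;> [left; right; left; right] <;> linarith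

theorem norm_vecTwo_one_neg_two : ‖!₂[(1 : ℝ), -2]‖ = ‖!₂[(-2 : ℝ), 1]‖ := by
  simp [EuclideanSpace.norm_eq, Fin.sum_univ_two]
  norm_num

end Plane

/-- If the two coordinates of `p ∈ ℝ²` differ, then there is a unique point of the
liveness set `C = {(a, b) : a ≥ 2b ∨ b ≥ 2a}` minimizing the Euclidean distance to `p`. -/
theorem stmt_11 (p : EuclideanSpace ℝ (Fin 2)) (hp : p 0 ≠ p 1) :
    ∃! w : EuclideanSpace ℝ (Fin 2),
      w ∈ {x : EuclideanSpace ℝ (Fin 2) | x 0 ≥ 2 * x 1 ∨ x 1 ≥ 2 * x 0} ∧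
      ∀ w' ∈ {x : EuclideanSpace ℝ (Fin 2) | x 0 ≥ 2 * x 1 ∨ x 1 ≥ 2 * x 0},
        ‖p - w‖ ≤ ‖p - w'‖ := by
  simp_rw [← dist_eq_norm]
  by_cases hC : p ∈ {x : EuclideanSpace ℝ (Fin 2) | x 0 ≥ 2 * x 1 ∨ x 1 ≥ 2 * x 0}
  · exact (isStrictNearest_self hC).existsUnique
  rw [liveness_eq_union] at hC ⊢
  simp only [Set.mem_union, Set.mem_ofPred_eq, not_or, not_le] at hC
  obtain ⟨h₁, h₂⟩ := hC
  have hu₁ := isStrictNearest_hyperplaneProj h₁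
  have hu₂ := isStrictNearest_hyperplaneProj h₂
  rcases hp.lt_or_gt with hlt | hlt
  · rw [Set.union_comm]
    refine (hu₂.union_of_dist_lt hu₁ ?_).existsUnique
    refine dist_hyperplaneProj_lt norm_vecTwo_one_neg_two.symm h₂ ?_
    rw [inner_vecTwo, inner_vecTwo]
    linarith
  · refine (hu₁.union_of_dist_lt hu₂ ?_).existsUnique
    refine dist_hyperplaneProj_lt norm_vecTwo_one_neg_two h₁ ?_
    rw [inner_vecTwo, inner_vecTwo]
    linarith
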